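/- Let H be a graph of order p, G_i be d_i-regular graphs of order n_i, and G the H-join. Then s(G) ≤ max_i d_i + λ_1(H)·λ_1(P) − min{ d_{i*} − s(G_{i*}), λ_p(M) }, where P is the p×p matrix with zero diagonal and (i,j) entry √(n_i n_j) for i ≠ j, M = A(H)N + D, and i* achieves min_i (d_i − s(G_i)). -/

import Mathlib

open scoped Classical

/-- Adjacency matrix of a simple graph over the reals. -/
noncomputable def adjMat {W : Type*} [Fintype W] (G : SimpleGraph W) : Matrix W W ℝ :=
  fun x y => if G.Adj x y then 1 else 0

/-- `μ` is an eigenvalue of the adjacency matrix of `G`. -/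
def IsEigen {W : Type*} [Fintype W] (G : SimpleGraph W) (μ : ℝ) : Prop :=
  ∃ v : W → ℝ, v ≠ 0 ∧ (adjMat G).mulVec v = μ • v

/-- Largest adjacency eigenvalue. -/
noncomputable def lamMax {W : Type*} [Fintype W] (G : SimpleGraph W) : ℝ :=
  sSup {μ | IsEigen G μ}

/-- Smallest adjacency eigenvalue. -/
noncomputable def lamMin {W : Type*} [Fintype W] (G : SimpleGraph W) : ℝ :=
  sInf {μ | IsEigen G μ}

/-- Spread of a graph: largest minus smallest adjacency eigenvalue. -/
noncomputable def spread {W : Type*} [Fintype W] (G : SimpleGraph W) : ℝ :=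
  lamMax G - lamMin G

/-- An eigenvalue is non-main if its eigenspace is orthogonal to the all-ones vector. -/
def IsNonMain {W : Type*} [Fintype W] (G : SimpleGraph W) (μ : ℝ) : Prop :=
  ∀ v : W → ℝ, (adjMat G).mulVec v = μ • v → ∑ i, v i = 0

/-- `S` is a `(k,τ)`-regular set in `G`. -/
def IsKTauRegularSet {W : Type*} [Fintype W] (G : SimpleGraph W) (S : Set W) (k τ : ℕ) : Prop :=
  (∀ i ∈ S, {j | j ∈ S ∧ G.Adj i j}.ncard = k) ∧
  (∀ i ∉ S, {j | j ∈ S ∧ G.Adj i j}.ncard = τ)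

/-- Characteristic vector of a vertex subset. -/
noncomputable def charVec {W : Type*} (S : Set W) : W → ℝ :=
  fun i => if i ∈ S then 1 else 0

/-- `G` is `d`-regular (each row of the adjacency matrix sums to `d`). -/
def IsReg {W : Type*} [Fintype W] (G : SimpleGraph W) (d : ℕ) : Prop :=
  ∀ i, ∑ j, adjMat G i j = (d : ℝ)

/-- Adjacency spectrum of `G` as a multiset (roots of the characteristic polynomial). -/
noncomputable def specMul {W : Type*} [Fintype W] (G : SimpleGraph W) : Multiset ℝ :=
  (adjMat G).charpoly.roots

/-- The `(H, 𝒮)`-generalized join of the family `G` constrained by vertex subsets `S`. -/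
def genJoin {p : ℕ} {V : Fin p → Type*} (H : SimpleGraph (Fin p))
    (G : ∀ i, SimpleGraph (V i)) (S : ∀ i, Set (V i)) : SimpleGraph (Σ i, V i) where
  Adj x y :=
    (∃ (i : Fin p) (a b : V i), x = ⟨i, a⟩ ∧ y = ⟨i, b⟩ ∧ (G i).Adj a b) ∨
    (x.1 ≠ y.1 ∧ H.Adj x.1 y.1 ∧ x.2 ∈ S x.1 ∧ y.2 ∈ S y.1)
  symm := by
    constructor
    rintro x y (⟨i, a, b, rfl, rfl, hab⟩ | ⟨hne, hH, hx, hy⟩)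
    · exact Or.inl ⟨i, b, a, rfl, rfl, hab.symm⟩
    · exact Or.inr ⟨hne.symm, hH.symm, hy, hx⟩
  loopless := by
    constructor
    rintro x (⟨i, a, b, rfl, h2, hab⟩ | ⟨hne, _⟩)
    · obtain ⟨rfl⟩ := heq_iff_eq.mp (Sigma.mk.inj_iff.mp h2).2
      exact (G i).loopless.irrefl a hab
    · exact hne rfl

/-- The join of two vertex-disjoint graphs. -/
def joinG {A B : Type*} (G1 : SimpleGraph A) (G2 : SimpleGraph B) : SimpleGraph (A ⊕ B) where
  Adj x y :=
    match x, y with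
    | .inl a, .inl b => G1.Adj a b
    | .inr a, .inr b => G2.Adj a b
    | .inl _, .inr _ => True
    | .inr _, .inl _ => True
  symm := by
    constructor
    rintro (a | a) (b | b) h
    · exact h.symm
    · trivial
    · trivial
    · exact h.symm
  loopless := by
    constructor
    rintro (a | a) h
    · exact G1.loopless.irrefl a h
    · exact G2.loopless.irrefl a h

/-- `μ` is an eigenvalue of the real matrix `M`. -/
def matEigen {p : ℕ} (M : Matrix (Fin p) (Fin p) ℝ) (μ : ℝ) : Prop :=
  ∃ v : Fin p → ℝ, v ≠ 0 ∧ M.mulVec v = μ • v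

noncomputable def matMax {p : ℕ} (M : Matrix (Fin p) (Fin p) ℝ) : ℝ :=
  sSup {μ | matEigen M μ}

noncomputable def matMin {p : ℕ} (M : Matrix (Fin p) (Fin p) ℝ) : ℝ :=
  sInf {μ | matEigen M μ}

noncomputable def matSpread {p : ℕ} (M : Matrix (Fin p) (Fin p) ℝ) : ℝ :=
  matMax M - matMin M

/-- The matrix `M = A(H) N + D` associated with an `H`-join of regular graphs. -/
noncomputable def Mjoin {p : ℕ} (H : SimpleGraph (Fin p)) (n d : Fin p → ℕ) :
    Matrix (Fin p) (Fin p) ℝ :=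
  adjMat H * Matrix.diagonal (fun i => (n i : ℝ)) + Matrix.diagonal (fun i => (d i : ℝ))

/-- Average degree of a graph. -/
noncomputable def avgDeg {W : Type*} [Fintype W] (G : SimpleGraph W) : ℝ :=
  2 * G.edgeSet.ncard / Fintype.card W

/-- The graph `G(n,k) = K_k ∨ K̄_{n-k}`. -/
def Gnk (n k : ℕ) : SimpleGraph (Fin k ⊕ Fin (n - k)) :=
  joinG (⊤ : SimpleGraph (Fin k)) (⊥ : SimpleGraph (Fin (n - k)))



/-! The adjacency form of the join splits as `v ⬝ A v = ∑ᵢ vᵢ ⬝ A(Gᵢ) vᵢ + s ⬝ A(H) s`, where `vᵢ`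
is the restriction of `v` to the `i`-th block and `s` is the vector of block sums.

Upper bound: each block term is at most `dᵢ ‖vᵢ‖²`. Writing `sᵢ = √nᵢ tᵢ`, the coupling term becomes
`t ⬝ (A(H) ⊙ P) t`, and `‖t‖ ≤ ‖v‖` by Cauchy–Schwarz. For nonnegative symmetric `A`, `P` with
largest eigenvalues `α`, `β`, every eigenvalue lies in `[-α, α]`, resp. `[-β, β]`, so by the Schur
product theorem `(α - A) ⊙ (β + P) + (α + A) ⊙ (β - P) = 2 (αβ - A ⊙ P)` is positive semidefinite.

Lower bound: split `v = w + z`, with `w` constant on each block and `z` of zero block sums. The two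
parts are orthogonal for the inner product and for the form, since the `Gᵢ` are regular. The form
on `z` sees only the blocks, whose eigenvalues are at least `λ_1(Gᵢ) - s(Gᵢ) = dᵢ - s(Gᵢ)`; on `w`
it equals `y ⬝ (D + N^{1/2} A(H) N^{1/2}) y` with `‖y‖ = ‖w‖`, and every eigenvalue of that
matrix is an eigenvalue of `M = A(H) N + D`. -/

open Matrix

namespace Matrix

variable {n : Type*} [Fintype n]

theorem dotProduct_self_nonneg (v : n → ℝ) : 0 ≤ v ⬝ᵥ v :=
  Fintype.sum_nonneg fun i => mul_self_nonneg (v i)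

theorem dotProduct_self_pos {v : n → ℝ} (hv : v ≠ 0) : 0 < v ⬝ᵥ v :=
  (dotProduct_self_nonneg v).lt_of_ne' (dotProduct_self_eq_zero.not.mpr hv)

theorem abs_dotProduct_mulVec_le {A : Matrix n n ℝ} (hA0 : ∀ i j, 0 ≤ A i j) (v : n → ℝ) :
    |v ⬝ᵥ A *ᵥ v| ≤ |v| ⬝ᵥ A *ᵥ |v| := by
  refine (Finset.abs_sum_le_sum_abs _ _).trans (Finset.sum_le_sum fun i _ => ?_)
  rw [abs_mul]
  refine mul_le_mul_of_nonneg_left ((Finset.abs_sum_le_sum_abs _ _).trans ?_) (abs_nonneg _)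
  simp [mulVec, dotProduct, abs_mul, abs_of_nonneg (hA0 _ _)]

theorem IsHermitian.dotProduct_mulVec_comm {A : Matrix n n ℝ} (hA : A.IsHermitian)
    (u v : n → ℝ) : u ⬝ᵥ A *ᵥ v = v ⬝ᵥ A *ᵥ u := by
  rw [dotProduct_mulVec, ← mulVec_transpose, ← conjTranspose_eq_transpose_of_trivial, hA,
    dotProduct_comm]

theorem IsHermitian.le_dotProduct_mulVec_add {A : Matrix n n ℝ} (hA : A.IsHermitian) {c : ℝ}
    {w z : n → ℝ} (hwz : w ⬝ᵥ z = 0) (hAwz : z ⬝ᵥ A *ᵥ w = 0)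
    (hw : c * (w ⬝ᵥ w) ≤ w ⬝ᵥ A *ᵥ w) (hz : c * (z ⬝ᵥ z) ≤ z ⬝ᵥ A *ᵥ z) :
    c * ((w + z) ⬝ᵥ (w + z)) ≤ (w + z) ⬝ᵥ A *ᵥ (w + z) := by
  have hAzw : w ⬝ᵥ A *ᵥ z = 0 := by rw [hA.dotProduct_mulVec_comm, hAwz]
  simp only [mulVec_add, dotProduct_add, add_dotProduct, hAwz, hAzw, dotProduct_comm z w, hwz]
  linarith

variable [DecidableEq n]

theorem diagonal_mulVec_eq_mul (r x : n → ℝ) : diagonal r *ᵥ x = r * x :=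
  funext (mulVec_diagonal r x)

theorem dotProduct_diagonal_mul_mul_diagonal_mulVec (B : Matrix n n ℝ) (r t : n → ℝ) :
    t ⬝ᵥ (diagonal r * B * diagonal r) *ᵥ t = (r * t) ⬝ᵥ B *ᵥ (r * t) := by
  simp only [dotProduct, mulVec, mul_diagonal, diagonal_mul, Pi.mul_apply, Finset.mul_sum]
  exact Finset.sum_congr rfl fun i _ => Finset.sum_congr rfl fun j _ => by ring

theorem mem_spectrum_iff_exists_mulVec_eq_smul {K : Type*} [Field K] {A : Matrix n n K} {μ : K} :
    μ ∈ spectrum K A ↔ ∃ v, v ≠ 0 ∧ A *ᵥ v = μ • v := by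
  rw [← spectrum_toLin', ← Module.End.hasEigenvalue_iff_mem_spectrum,
    Module.End.hasEigenvalue_iff, Submodule.ne_bot_iff]
  simp [and_comm]

theorem spectrum_transpose {K : Type*} [Field K] (A : Matrix n n K) :
    spectrum K Aᵀ = spectrum K A := by
  ext μ
  rw [spectrum.mem_iff, spectrum.mem_iff, ← isUnit_transpose, transpose_sub,
    algebraMap_eq_diagonal, diagonal_transpose, transpose_transpose]

theorem le_sSup_spectrum {A : Matrix n n ℝ} {μ : ℝ} (hμ : μ ∈ spectrum ℝ A) :
    μ ≤ sSup (spectrum ℝ A) :=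
  le_csSup A.finite_real_spectrum.bddAbove hμ

theorem sInf_spectrum_le {A : Matrix n n ℝ} {μ : ℝ} (hμ : μ ∈ spectrum ℝ A) :
    sInf (spectrum ℝ A) ≤ μ :=
  csInf_le A.finite_real_spectrum.bddBelow hμ

theorem le_of_forall_le_dotProduct_mulVec {A : Matrix n n ℝ} {c μ : ℝ}
    (h : ∀ v, c * (v ⬝ᵥ v) ≤ v ⬝ᵥ A *ᵥ v) (hμ : μ ∈ spectrum ℝ A) : c ≤ μ := by
  obtain ⟨v, hv, hAv⟩ := mem_spectrum_iff_exists_mulVec_eq_smul.mp hμ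
  refine le_of_mul_le_mul_right ?_ (dotProduct_self_pos hv)
  simpa [hAv] using h v

theorem le_of_forall_dotProduct_mulVec_le {A : Matrix n n ℝ} {c μ : ℝ}
    (h : ∀ v, v ⬝ᵥ A *ᵥ v ≤ c * (v ⬝ᵥ v)) (hμ : μ ∈ spectrum ℝ A) : μ ≤ c := by
  obtain ⟨v, hv, hAv⟩ := mem_spectrum_iff_exists_mulVec_eq_smul.mp hμ
  refine le_of_mul_le_mul_right ?_ (dotProduct_self_pos hv)
  simpa [hAv] using h v

theorem sSup_sub_sInf_spectrum_le {A : Matrix n n ℝ} {lo hi : ℝ}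
    (hlo : ∀ v, lo * (v ⬝ᵥ v) ≤ v ⬝ᵥ A *ᵥ v) (hhi : ∀ v, v ⬝ᵥ A *ᵥ v ≤ hi * (v ⬝ᵥ v))
    (hle : lo ≤ hi) : sSup (spectrum ℝ A) - sInf (spectrum ℝ A) ≤ hi - lo := by
  rcases (spectrum ℝ A).eq_empty_or_nonempty with h | hne
  · simpa [h] using hle
  · linarith [csSup_le hne fun _ => le_of_forall_dotProduct_mulVec_le hhi,
      le_csInf hne fun _ => le_of_forall_le_dotProduct_mulVec hlo]

namespace IsHermitian

variable {A : Matrix n n ℝ} (hA : A.IsHermitian)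
include hA

theorem posSemidef_smul_one_sub {c : ℝ} (h : ∀ μ ∈ spectrum ℝ A, μ ≤ c) :
    (c • 1 - A).PosSemidef := by
  refine posSemidef_iff_isHermitian_and_spectrum_nonneg.mpr
    ⟨(isHermitian_one.smul (IsSelfAdjoint.all c)).sub hA, ?_⟩
  rw [← Algebra.algebraMap_eq_smul_one, ← spectrum.singleton_sub_eq]
  rintro _ ⟨_, rfl, μ, hμ, rfl⟩
  simpa using h μ hμ

theorem posSemidef_sub_smul_one {c : ℝ} (h : ∀ μ ∈ spectrum ℝ A, c ≤ μ) :
    (A - c • 1).PosSemidef := by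
  refine posSemidef_iff_isHermitian_and_spectrum_nonneg.mpr
    ⟨hA.sub (isHermitian_one.smul (IsSelfAdjoint.all c)), ?_⟩
  rw [← Algebra.algebraMap_eq_smul_one, ← spectrum.sub_singleton_eq]
  rintro _ ⟨μ, hμ, _, rfl, rfl⟩
  simpa using h μ hμ

theorem dotProduct_mulVec_le {c : ℝ} (h : ∀ μ ∈ spectrum ℝ A, μ ≤ c) (v : n → ℝ) :
    v ⬝ᵥ A *ᵥ v ≤ c * (v ⬝ᵥ v) := by
  have := (hA.posSemidef_smul_one_sub h).dotProduct_mulVec_nonneg v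
  simpa [sub_mulVec, smul_mulVec, dotProduct_sub] using this

theorem le_dotProduct_mulVec {c : ℝ} (h : ∀ μ ∈ spectrum ℝ A, c ≤ μ) (v : n → ℝ) :
    c * (v ⬝ᵥ v) ≤ v ⬝ᵥ A *ᵥ v := by
  have := (hA.posSemidef_sub_smul_one h).dotProduct_mulVec_nonneg v
  simpa [sub_mulVec, smul_mulVec, dotProduct_sub] using this

/- If `(D + R A R) x = μ x`, then `R x` is an eigenvector of `(A R² + D)ᵀ = R² A + D` for `μ`;
if `R x = 0`, then `μ = δ i` for some `i` with `r i = 0`, and `Pi.single i 1` is an eigenvector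
of `A R² + D`. -/
theorem spectrum_diagonal_add_diagonal_mul_mul_diagonal_subset (δ r : n → ℝ) :
    spectrum ℝ (diagonal δ + diagonal r * A * diagonal r) ⊆
      spectrum ℝ (A * diagonal (r * r) + diagonal δ) := by
  intro μ hμ
  obtain ⟨x, hx, hSx⟩ := mem_spectrum_iff_exists_mulVec_eq_smul.mp hμ
  have hAT : Aᵀ = A := (conjTranspose_eq_transpose_of_trivial A).symm.trans hA
  have hrow : ∀ i, δ i * x i + r i * (A *ᵥ (r * x)) i = μ * x i := fun i => by
    simpa [add_mulVec, ← mulVec_mulVec, diagonal_mulVec_eq_mul] using congrFun hSx i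
  by_cases hu : r * x = 0
  · obtain ⟨i, hxi⟩ := Function.ne_iff.mp hx
    have hri : r i = 0 := (mul_eq_zero.mp (congrFun hu i)).resolve_right hxi
    have hμi : μ = δ i := by
      have := hrow i
      rw [hu, mulVec_zero, hri] at this
      exact (mul_right_cancel₀ hxi (by simpa using this)).symm
    refine mem_spectrum_iff_exists_mulVec_eq_smul.mpr ⟨Pi.single i 1, by simp, ?_⟩
    ext j
    by_cases hji : j = i
    · subst hji; simp [mulVec_single, hri, hμi]
    · simp [mulVec_single, hri, hji]
  · rw [← spectrum_transpose, mem_spectrum_iff_exists_mulVec_eq_smul]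
    refine ⟨r * x, hu, ?_⟩
    ext i
    simp only [transpose_add, transpose_mul, hAT, diagonal_transpose, add_mulVec,
      ← mulVec_mulVec, diagonal_mulVec_eq_mul, Pi.add_apply, Pi.mul_apply, Pi.smul_apply,
      smul_eq_mul]
    linear_combination r i * hrow i

variable (hA0 : ∀ i j, 0 ≤ A i j)
include hA0

theorem neg_sSup_spectrum_le {μ : ℝ} (hμ : μ ∈ spectrum ℝ A) : -sSup (spectrum ℝ A) ≤ μ := by
  refine le_of_forall_le_dotProduct_mulVec (fun v => ?_) hμ
  have habs : |v| ⬝ᵥ |v| = v ⬝ᵥ v := by simp [dotProduct, abs_mul_abs_self]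
  calc -sSup (spectrum ℝ A) * (v ⬝ᵥ v) ≤ -(|v| ⬝ᵥ A *ᵥ |v|) := by
        rw [← habs, neg_mul, neg_le_neg_iff]
        exact hA.dotProduct_mulVec_le (fun _ => le_sSup_spectrum) |v|
    _ ≤ v ⬝ᵥ A *ᵥ v := neg_le_of_abs_le (abs_dotProduct_mulVec_le hA0 v)

theorem sSup_spectrum_nonneg : 0 ≤ sSup (spectrum ℝ A) := by
  rcases (spectrum ℝ A).eq_empty_or_nonempty with h | ⟨μ, hμ⟩
  · rw [h, Real.sSup_empty]
  · linarith [le_sSup_spectrum hμ, hA.neg_sSup_spectrum_le hA0 hμ]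

theorem dotProduct_hadamard_mulVec_le {P : Matrix n n ℝ} (hP : P.IsHermitian)
    (hP0 : ∀ i j, 0 ≤ P i j) (t : n → ℝ) :
    t ⬝ᵥ (A ⊙ P) *ᵥ t ≤ sSup (spectrum ℝ A) * sSup (spectrum ℝ P) * (t ⬝ᵥ t) := by
  set α := sSup (spectrum ℝ A)
  set β := sSup (spectrum ℝ P)
  have hschur : (α • 1 - A) ⊙ (P - (-β) • 1) + (A - (-α) • 1) ⊙ (β • 1 - P)
      = (2 : ℝ) • ((α * β) • 1 - A ⊙ P) := by
    ext i j
    by_cases hij : i = j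
    · subst hij; simp; ring
    · simp [one_apply_ne hij]; ring
  have hpsd : ((2 : ℝ) • ((α * β) • 1 - A ⊙ P)).PosSemidef := hschur ▸
    (((hA.posSemidef_smul_one_sub fun _ => le_sSup_spectrum).hadamard
      (hP.posSemidef_sub_smul_one fun _ => hP.neg_sSup_spectrum_le hP0)).add
    ((hA.posSemidef_sub_smul_one fun _ => hA.neg_sSup_spectrum_le hA0).hadamard
      (hP.posSemidef_smul_one_sub fun _ => le_sSup_spectrum)))
  have := hpsd.dotProduct_mulVec_nonneg t
  simp [sub_mulVec, smul_mulVec, dotProduct_sub] at this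
  linarith

end IsHermitian

end Matrix

theorem setOf_matEigen {p : ℕ} (M : Matrix (Fin p) (Fin p) ℝ) :
    {μ | matEigen M μ} = spectrum ℝ M :=
  Set.ext fun _ => mem_spectrum_iff_exists_mulVec_eq_smul.symm

section Graph

variable {W : Type*} [Fintype W] (G : SimpleGraph W)

theorem adjMat_self (x : W) : adjMat G x x = 0 := by
  simp [adjMat]

theorem adjMat_nonneg (x y : W) : 0 ≤ adjMat G x y := by
  unfold adjMat; split_ifs <;> norm_num

theorem adjMat_isHermitian : (adjMat G).IsHermitian := by
  ext x y
  simp [adjMat, G.adj_comm]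

theorem IsReg.mulVec_const {G : SimpleGraph W} {d : ℕ} (hG : IsReg G d) (c : ℝ) :
    adjMat G *ᵥ (fun _ => c) = fun _ => d * c := by
  ext x
  simp [mulVec, dotProduct, ← Finset.sum_mul, hG x]

theorem IsReg.dotProduct_mulVec_const {G : SimpleGraph W} {d : ℕ} (hG : IsReg G d) (v : W → ℝ)
    (c : ℝ) : v ⬝ᵥ adjMat G *ᵥ (fun _ => c) = d * c * ∑ x, v x := by
  simp [hG.mulVec_const, dotProduct, Finset.sum_mul, mul_comm]

variable [DecidableEq W]

theorem setOf_isEigen : {μ | IsEigen G μ} = spectrum ℝ (adjMat G) :=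
  Set.ext fun _ => mem_spectrum_iff_exists_mulVec_eq_smul.symm

theorem spread_eq : spread G = sSup (spectrum ℝ (adjMat G)) - sInf (spectrum ℝ (adjMat G)) := by
  rw [spread, lamMax, lamMin, setOf_isEigen]

theorem spread_nonneg : 0 ≤ spread G := by
  rw [spread_eq, sub_nonneg]
  rcases (spectrum ℝ (adjMat G)).eq_empty_or_nonempty with h | ⟨μ, hμ⟩
  · simp [h]
  · exact (sInf_spectrum_le hμ).trans (le_sSup_spectrum hμ)

variable {G} {d : ℕ} (hG : IsReg G d)
include hG

theorem IsReg.le_of_mem_spectrum {μ : ℝ} (hμ : μ ∈ spectrum ℝ (adjMat G)) : μ ≤ d := by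
  obtain ⟨x, hx⟩ := eigenvalue_mem_ball (A := adjMat G)
    (Module.End.hasEigenvalue_iff_mem_spectrum.mpr (by rwa [spectrum_toLin']))
  have hrow : ∑ y ∈ Finset.univ.erase x, ‖adjMat G x y‖ = d := by
    rw [Finset.sum_erase _ (by simp [adjMat_self]), ← hG x]
    simp [abs_of_nonneg (adjMat_nonneg G _ _)]
  rw [adjMat_self, hrow, Metric.mem_closedBall, Real.dist_0_eq_abs] at hx
  exact le_of_abs_le hx

theorem IsReg.mem_spectrum [Nonempty W] : (d : ℝ) ∈ spectrum ℝ (adjMat G) :=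
  mem_spectrum_iff_exists_mulVec_eq_smul.mpr
    ⟨fun _ => 1, Function.ne_iff.mpr ⟨Classical.arbitrary W, one_ne_zero⟩, by
      rw [hG.mulVec_const]; ext; simp⟩

theorem IsReg.sub_spread_le {μ : ℝ} (hμ : μ ∈ spectrum ℝ (adjMat G)) : d - spread G ≤ μ := by
  obtain ⟨v, hv, -⟩ := mem_spectrum_iff_exists_mulVec_eq_smul.mp hμ
  have : Nonempty W := (Function.ne_iff.mp hv).nonempty
  rw [spread_eq]
  linarith [le_sSup_spectrum hG.mem_spectrum, sInf_spectrum_le hμ]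

theorem IsReg.dotProduct_mulVec_le (v : W → ℝ) : v ⬝ᵥ adjMat G *ᵥ v ≤ d * (v ⬝ᵥ v) :=
  (adjMat_isHermitian G).dotProduct_mulVec_le (fun _ => hG.le_of_mem_spectrum) v

theorem IsReg.le_dotProduct_mulVec (v : W → ℝ) :
    (d - spread G) * (v ⬝ᵥ v) ≤ v ⬝ᵥ adjMat G *ᵥ v :=
  (adjMat_isHermitian G).le_dotProduct_mulVec (fun _ => hG.sub_spread_le) v

end Graph

theorem iInf_sub_spread_le_iSup {ι : Type*} [Finite ι] {V : ι → Type*} [∀ i, Fintype (V i)]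
    (G : ∀ i, SimpleGraph (V i)) (d : ι → ℕ) :
    ⨅ i, ((d i : ℝ) - spread (G i)) ≤ ⨆ i, (d i : ℝ) := by
  cases isEmpty_or_nonempty ι
  · simp
  · obtain ⟨i⟩ := ‹Nonempty ι›
    exact (ciInf_le (Finite.bddBelow_range _) i).trans
      ((sub_le_self _ (spread_nonneg _)).trans
        (le_ciSup (f := fun i => (d i : ℝ)) (Finite.bddAbove_range _) i))

section Sigma

variable {ι : Type*} {V : ι → Type*} [∀ i, Fintype (V i)]

def block (v : (Σ i, V i) → ℝ) (i : ι) : V i → ℝ := fun a => v ⟨i, a⟩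

def blockSum (v : (Σ i, V i) → ℝ) (i : ι) : ℝ := ∑ a, v ⟨i, a⟩

def blockConst (c : ι → ℝ) : (Σ i, V i) → ℝ := fun x => c x.1

theorem blockSum_sub (u v : (Σ i, V i) → ℝ) : blockSum (u - v) = blockSum u - blockSum v := by
  ext i; simp [blockSum]

theorem blockSum_blockConst (c : ι → ℝ) (i : ι) :
    blockSum (blockConst c : (Σ i, V i) → ℝ) i = Fintype.card (V i) * c i := by
  simp [blockSum, blockConst]

theorem blockSum_sq_le (v : (Σ i, V i) → ℝ) (i : ι) :
    blockSum v i ^ 2 ≤ Fintype.card (V i) * (block v i ⬝ᵥ block v i) := by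
  simpa [blockSum, block, dotProduct, sq] using
    sq_sum_le_card_mul_sum_sq (s := Finset.univ) (f := fun a => v ⟨i, a⟩)

theorem blockSum_eq_zero_of_card_eq_zero (v : (Σ i, V i) → ℝ) {i : ι}
    (hi : Fintype.card (V i) = 0) : blockSum v i = 0 := by
  have := Fintype.card_eq_zero_iff.mp hi
  simp [blockSum]

variable [Fintype ι]

theorem dotProduct_sigma (u v : (Σ i, V i) → ℝ) :
    u ⬝ᵥ v = ∑ i, block u i ⬝ᵥ block v i :=
  Fintype.sum_sigma _

theorem blockConst_dotProduct (c : ι → ℝ) (v : (Σ i, V i) → ℝ) :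
    blockConst c ⬝ᵥ v = c ⬝ᵥ blockSum v := by
  simp [dotProduct, blockConst, blockSum, Finset.mul_sum, Fintype.sum_sigma]

theorem dotProduct_submatrix_fst_mulVec (B : Matrix ι ι ℝ) (u v : (Σ i, V i) → ℝ) :
    u ⬝ᵥ B.submatrix Sigma.fst Sigma.fst *ᵥ v = blockSum u ⬝ᵥ B *ᵥ blockSum v := by
  simp only [dotProduct, mulVec, blockSum, submatrix_apply, Fintype.sum_sigma, ← Finset.mul_sum,
    ← Finset.sum_mul]

variable [DecidableEq ι]

theorem dotProduct_blockDiagonal'_mulVec (M : ∀ i, Matrix (V i) (V i) ℝ)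
    (u v : (Σ i, V i) → ℝ) :
    u ⬝ᵥ blockDiagonal' M *ᵥ v = ∑ i, block u i ⬝ᵥ M i *ᵥ block v i := by
  simp only [dotProduct, mulVec, Fintype.sum_sigma, block]
  refine Finset.sum_congr rfl fun i _ => Finset.sum_congr rfl fun a _ => ?_
  rw [Fintype.sum_eq_single i fun j hj => by simp [blockDiagonal'_apply_ne _ _ _ (Ne.symm hj)]]
  simp [blockDiagonal'_apply_eq]

end Sigma

section OffDiagSqrtMul

variable {ι : Type*} [DecidableEq ι] (n : ι → ℕ)

noncomputable def offDiagSqrtMul : Matrix ι ι ℝ :=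
  of fun i j => if i = j then 0 else √((n i : ℝ) * n j)

theorem offDiagSqrtMul_isHermitian : (offDiagSqrtMul n).IsHermitian := by
  ext i j
  simp [offDiagSqrtMul, eq_comm, mul_comm]

theorem offDiagSqrtMul_nonneg (i j : ι) : 0 ≤ offDiagSqrtMul n i j := by
  simp only [offDiagSqrtMul, of_apply]; split_ifs <;> positivity

theorem adjMat_hadamard_offDiagSqrtMul [Fintype ι] (H : SimpleGraph ι) :
    adjMat H ⊙ offDiagSqrtMul n =
      diagonal (fun i => √(n i : ℝ)) * adjMat H * diagonal (fun i => √(n i : ℝ)) := by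
  ext i j
  by_cases hij : i = j
  · subst hij; simp [adjMat_self]
  · simp [offDiagSqrtMul, hij, Real.sqrt_mul]; ring

end OffDiagSqrtMul

section Join

variable {p : ℕ} {V : Fin p → Type*} (H : SimpleGraph (Fin p)) (G : ∀ i, SimpleGraph (V i))

theorem genJoin_univ_adj_same {i : Fin p} {a b : V i} :
    (genJoin H G fun _ => Set.univ).Adj ⟨i, a⟩ ⟨i, b⟩ ↔ (G i).Adj a b := by
  simp only [genJoin, ne_eq, not_true_eq_false, false_and, or_false, Sigma.mk.inj_iff]
  constructor
  · rintro ⟨_, _, _, ⟨rfl, ha⟩, ⟨-, hb⟩, h⟩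
    rwa [eq_of_heq ha, eq_of_heq hb]
  · exact fun h => ⟨i, a, b, ⟨rfl, .rfl⟩, ⟨rfl, .rfl⟩, h⟩

theorem genJoin_univ_adj_of_ne {i j : Fin p} (hij : i ≠ j) (a : V i) (b : V j) :
    (genJoin H G fun _ => Set.univ).Adj ⟨i, a⟩ ⟨j, b⟩ ↔ H.Adj i j := by
  simp only [genJoin, Sigma.mk.inj_iff, hij, Set.mem_univ, ne_eq, not_false_eq_true, true_and,
    and_true, or_iff_right_iff_imp]
  rintro ⟨_, _, _, ⟨rfl, -⟩, ⟨rfl, -⟩, -⟩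
  exact absurd rfl hij

variable [∀ i, Fintype (V i)]

theorem adjMat_genJoin_univ :
    adjMat (genJoin H G fun _ => Set.univ) =
      blockDiagonal' (fun i => adjMat (G i)) + (adjMat H).submatrix Sigma.fst Sigma.fst := by
  ext ⟨i, a⟩ ⟨j, b⟩
  by_cases hij : i = j
  · subst hij
    simp [blockDiagonal'_apply_eq, adjMat, genJoin_univ_adj_same]
  · simp [blockDiagonal'_apply_ne _ _ _ hij, adjMat, genJoin_univ_adj_of_ne H G hij]

theorem dotProduct_adjMat_genJoin_univ_mulVec (u v : (Σ i, V i) → ℝ) :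
    u ⬝ᵥ adjMat (genJoin H G fun _ => Set.univ) *ᵥ v =
      ∑ i, block u i ⬝ᵥ adjMat (G i) *ᵥ block v i + blockSum u ⬝ᵥ adjMat H *ᵥ blockSum v := by
  rw [adjMat_genJoin_univ, add_mulVec, dotProduct_add, dotProduct_blockDiagonal'_mulVec,
    dotProduct_submatrix_fst_mulVec]

variable {G} {d : Fin p → ℕ} (hreg : ∀ i, IsReg (G i) (d i))
include hreg

theorem iInf_mul_le_dotProduct_adjMat_genJoin_univ_mulVec {z : (Σ i, V i) → ℝ}
    (hz : blockSum z = 0) :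
    (⨅ i, ((d i : ℝ) - spread (G i))) * (z ⬝ᵥ z) ≤
      z ⬝ᵥ adjMat (genJoin H G fun _ => Set.univ) *ᵥ z := by
  rw [dotProduct_adjMat_genJoin_univ_mulVec, hz, zero_dotProduct, add_zero, dotProduct_sigma,
    Finset.mul_sum]
  refine Finset.sum_le_sum fun i _ => le_trans ?_ ((hreg i).le_dotProduct_mulVec _)
  exact mul_le_mul_of_nonneg_right
    (ciInf_le (f := fun i => (d i : ℝ) - spread (G i)) (Finite.bddBelow_range _) i)
    (dotProduct_self_nonneg _)

variable {n : Fin p → ℕ} (hcard : ∀ i, Fintype.card (V i) = n i)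
include hcard

theorem dotProduct_adjMat_genJoin_univ_mulVec_le (v : (Σ i, V i) → ℝ) :
    v ⬝ᵥ adjMat (genJoin H G fun _ => Set.univ) *ᵥ v ≤
      ((⨆ i, (d i : ℝ)) + sSup (spectrum ℝ (adjMat H)) * sSup (spectrum ℝ (offDiagSqrtMul n))) *
        (v ⬝ᵥ v) := by
  set r : Fin p → ℝ := fun i => √(n i : ℝ)
  set t : Fin p → ℝ := fun i => blockSum v i / r i
  have hst : blockSum v = r * t := funext fun i => by
    rcases eq_or_ne (n i) 0 with h | h
    · simp [blockSum_eq_zero_of_card_eq_zero v ((hcard i).trans h), t]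
    · have : r i ≠ 0 := by positivity
      simp [t, mul_div_cancel₀ _ this]
  have htt : t ⬝ᵥ t ≤ v ⬝ᵥ v := by
    rw [dotProduct_sigma]
    refine Finset.sum_le_sum fun i _ => ?_
    change blockSum v i / r i * (blockSum v i / r i) ≤ _
    rw [div_mul_div_comm, ← sq, Real.mul_self_sqrt (Nat.cast_nonneg _), ← hcard i]
    exact div_le_of_le_mul₀ (Nat.cast_nonneg _) (dotProduct_self_nonneg _)
      ((blockSum_sq_le v i).trans_eq (mul_comm _ _))
  have hblocks :
      ∑ i, block v i ⬝ᵥ adjMat (G i) *ᵥ block v i ≤ (⨆ i, (d i : ℝ)) * (v ⬝ᵥ v) := by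
    rw [dotProduct_sigma, Finset.mul_sum]
    refine Finset.sum_le_sum fun i _ => ((hreg i).dotProduct_mulVec_le _).trans ?_
    exact mul_le_mul_of_nonneg_right
      (le_ciSup (f := fun i => (d i : ℝ)) (Finite.bddAbove_range _) i) (dotProduct_self_nonneg _)
  have hA := adjMat_isHermitian H
  have hP := offDiagSqrtMul_isHermitian n
  have hcoupling : blockSum v ⬝ᵥ adjMat H *ᵥ blockSum v ≤
      sSup (spectrum ℝ (adjMat H)) * sSup (spectrum ℝ (offDiagSqrtMul n)) * (v ⬝ᵥ v) :=
    calc blockSum v ⬝ᵥ adjMat H *ᵥ blockSum v = t ⬝ᵥ (adjMat H ⊙ offDiagSqrtMul n) *ᵥ t := by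
          rw [adjMat_hadamard_offDiagSqrtMul, dotProduct_diagonal_mul_mul_diagonal_mulVec, hst]
      _ ≤ _ := hA.dotProduct_hadamard_mulVec_le (adjMat_nonneg H) hP (offDiagSqrtMul_nonneg n) t
      _ ≤ _ := mul_le_mul_of_nonneg_left htt
          (mul_nonneg (hA.sSup_spectrum_nonneg (adjMat_nonneg H))
            (hP.sSup_spectrum_nonneg (offDiagSqrtMul_nonneg n)))
  rw [dotProduct_adjMat_genJoin_univ_mulVec, add_mul]
  exact add_le_add hblocks hcoupling

theorem sInf_spectrum_Mjoin_mul_le_dotProduct_blockConst (c : Fin p → ℝ) :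
    sInf (spectrum ℝ (Mjoin H n d)) * ((blockConst c : (Σ i, V i) → ℝ) ⬝ᵥ blockConst c) ≤
      blockConst c ⬝ᵥ adjMat (genJoin H G fun _ => Set.univ) *ᵥ blockConst c := by
  set r : Fin p → ℝ := fun i => √(n i : ℝ)
  have hrr : ∀ i, r i * r i = n i := fun i => Real.mul_self_sqrt (Nat.cast_nonneg _)
  have hsum : blockSum (blockConst c : (Σ i, V i) → ℝ) = r * (r * c) := by
    ext i
    rw [blockSum_blockConst, hcard i, Pi.mul_apply, Pi.mul_apply, ← mul_assoc, hrr]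
  set S := diagonal (fun i => (d i : ℝ)) + adjMat H ⊙ offDiagSqrtMul n with hSdef
  have hS : S.IsHermitian := (isHermitian_diagonal _).add
    ((adjMat_isHermitian H).hadamard (offDiagSqrtMul_isHermitian n))
  have hSM : spectrum ℝ S ⊆ spectrum ℝ (Mjoin H n d) := by
    rw [hSdef, Mjoin, show (fun i => (n i : ℝ)) = r * r from funext fun i => (hrr i).symm,
      adjMat_hadamard_offDiagSqrtMul]
    exact (adjMat_isHermitian H).spectrum_diagonal_add_diagonal_mul_mul_diagonal_subset _ _
  have hquad : blockConst c ⬝ᵥ adjMat (genJoin H G fun _ => Set.univ) *ᵥ blockConst c =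
      (r * c) ⬝ᵥ S *ᵥ (r * c) := by
    rw [dotProduct_adjMat_genJoin_univ_mulVec, add_mulVec, dotProduct_add,
      adjMat_hadamard_offDiagSqrtMul, dotProduct_diagonal_mul_mul_diagonal_mulVec, hsum]
    congr 1
    simp only [dotProduct, diagonal_mulVec_eq_mul, Pi.mul_apply]
    refine Finset.sum_congr rfl fun i _ => ?_
    have hblock : block (blockConst c) i ⬝ᵥ adjMat (G i) *ᵥ block (blockConst c) i =
        d i * c i * (n i * c i) := by
      rw [show block (blockConst c) i = fun _ => c i from rfl, (hreg i).dotProduct_mulVec_const,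
        Finset.sum_const, Finset.card_univ, hcard i, nsmul_eq_mul]
    rw [← dotProduct, hblock]
    linear_combination -(d i * c i * c i) * hrr i
  have hnorm : (blockConst c : (Σ i, V i) → ℝ) ⬝ᵥ blockConst c = (r * c) ⬝ᵥ (r * c) := by
    rw [blockConst_dotProduct, hsum]
    simp only [dotProduct, Pi.mul_apply]
    exact Finset.sum_congr rfl fun i _ => by ring
  rw [hquad, hnorm]
  exact hS.le_dotProduct_mulVec (fun _ hμ => sInf_spectrum_le (hSM hμ)) _

theorem min_mul_le_dotProduct_adjMat_genJoin_univ_mulVec (v : (Σ i, V i) → ℝ) :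
    min (⨅ i, ((d i : ℝ) - spread (G i))) (sInf (spectrum ℝ (Mjoin H n d))) * (v ⬝ᵥ v) ≤
      v ⬝ᵥ adjMat (genJoin H G fun _ => Set.univ) *ᵥ v := by
  set c : Fin p → ℝ := fun i => blockSum v i / n i
  set z := v - blockConst c
  have hz : blockSum z = 0 := by
    ext i
    rw [blockSum_sub, Pi.sub_apply, blockSum_blockConst, hcard i, Pi.zero_apply]
    rcases eq_or_ne (n i) 0 with h | h
    · simp [h, blockSum_eq_zero_of_card_eq_zero v ((hcard i).trans h)]
    · rw [mul_div_cancel₀ _ (Nat.cast_ne_zero.mpr h : (n i : ℝ) ≠ 0), sub_self]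
  have hcross : z ⬝ᵥ adjMat (genJoin H G fun _ => Set.univ) *ᵥ blockConst c = 0 := by
    rw [dotProduct_adjMat_genJoin_univ_mulVec, hz, zero_dotProduct, add_zero]
    refine Finset.sum_eq_zero fun i _ => ?_
    rw [show block (blockConst c) i = fun _ => c i from rfl, (hreg i).dotProduct_mulVec_const,
      show ∑ a, block z i a = blockSum z i from rfl, hz, Pi.zero_apply, mul_zero]
  rw [← add_sub_cancel (blockConst c) v]
  refine (adjMat_isHermitian _).le_dotProduct_mulVec_add ?_ hcross ?_ ?_
  · rw [blockConst_dotProduct, hz, dotProduct_zero]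
  · exact (mul_le_mul_of_nonneg_right (min_le_right _ _) (dotProduct_self_nonneg _)).trans
      (sInf_spectrum_Mjoin_mul_le_dotProduct_blockConst H hreg hcard c)
  · exact (mul_le_mul_of_nonneg_right (min_le_left _ _) (dotProduct_self_nonneg _)).trans
      (iInf_mul_le_dotProduct_adjMat_genJoin_univ_mulVec H hreg hz)

end Join

theorem stmt16_general {p : ℕ} {V : Fin p → Type*} [∀ i, Fintype (V i)]
    (H : SimpleGraph (Fin p)) (G : ∀ i, SimpleGraph (V i)) (d n : Fin p → ℕ)
    (hreg : ∀ i, IsReg (G i) (d i)) (hcard : ∀ i, Fintype.card (V i) = n i) :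
    spread (genJoin H G (fun _ => Set.univ)) ≤
      (⨆ i, (d i : ℝ)) +
        lamMax H *
          matMax (Matrix.of fun i j : Fin p =>
            if i = j then 0 else Real.sqrt ((n i : ℝ) * (n j : ℝ))) -
        min (⨅ i, ((d i : ℝ) - spread (G i))) (matMin (Mjoin H n d)) := by
  rw [spread_eq, lamMax, setOf_isEigen, matMax, setOf_matEigen, matMin, setOf_matEigen]
  refine sSup_sub_sInf_spectrum_le (min_mul_le_dotProduct_adjMat_genJoin_univ_mulVec H hreg hcard)
    (dotProduct_adjMat_genJoin_univ_mulVec_le H hreg hcard) ?_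
  have hα := (adjMat_isHermitian H).sSup_spectrum_nonneg (adjMat_nonneg H)
  have hβ := (offDiagSqrtMul_isHermitian n).sSup_spectrum_nonneg (offDiagSqrtMul_nonneg n)
  calc min (⨅ i, ((d i : ℝ) - spread (G i))) (sInf (spectrum ℝ (Mjoin H n d)))
      ≤ ⨅ i, ((d i : ℝ) - spread (G i)) := min_le_left _ _
    _ ≤ ⨆ i, (d i : ℝ) := iInf_sub_spread_le_iSup G d
    _ ≤ _ := le_add_of_nonneg_right (mul_nonneg hα hβ)

/-- upper bound
`s(G) ≤ max_i d_i + λ_1(H) λ_1(P) - min { min_i (d_i - s(G_i)), λ_p(M) }` for the `H`-join. -/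
theorem stmt16 {p : ℕ} (hp : 0 < p) {V : Fin p → Type*} [∀ i, Fintype (V i)]
    (H : SimpleGraph (Fin p)) (G : ∀ i, SimpleGraph (V i)) (d n : Fin p → ℕ)
    (hreg : ∀ i, IsReg (G i) (d i)) (hcard : ∀ i, Fintype.card (V i) = n i) :
    spread (genJoin H G (fun _ => Set.univ)) ≤
      (⨆ i, (d i : ℝ)) +
        lamMax H *
          matMax (Matrix.of fun i j : Fin p =>
            if i = j then 0 else Real.sqrt ((n i : ℝ) * (n j : ℝ))) -
        min (⨅ i, ((d i : ℝ) - spread (G i))) (matMin (Mjoin H n d)) :=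
  stmt16_general H G d n hreg hcard
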